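/- Suppressing a degree-2 situation preserves four-flag edges: let E be a graph embedding with an unlabelled vertex u of size 4 that is not isolated, incident with edges e₁ and e₂. Let x₁, x₂ = φ(x₁) be flags of u with x_i in e_i, and y_i = θ(x_i). Deleting the four flags of u and replacing the θ-orbits inside e₁ and e₂ by {y₁, y₂} and {σ(y₁), σ(y₂)} yields a structure E' that is again a graph embedding (all three permutations remain fixed-point-free involutions and every edge of E' has exactly 4 flags), with one fewer vertex and one fewer edge than E. -/
import Mathlib


def FPF {F : Type*} (π : Equiv.Perm F) : Prop := π * π = 1 ∧ ∀ x, π x ≠ x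

def orbSet {F : Type*} (S : Set (Equiv.Perm F)) (x : F) : Set F :=
  MulAction.orbit (Subgroup.closure S) x

noncomputable def orbCount {F : Type*} (S : Set (Equiv.Perm F)) : ℕ :=
  Nat.card (MulAction.orbitRel.Quotient (Subgroup.closure S) F)

noncomputable def genus {F : Type*} (θ σ' φ' : Equiv.Perm F) : ℤ :=
  (orbCount {θ, σ'} : ℤ) - orbCount {σ', φ'} - orbCount {θ, φ'} + 2 * orbCount {θ, σ', φ'}

def IsGraphEmb {F : Type*} (θ σ' φ' : Equiv.Perm F) : Prop :=
  FPF θ ∧ FPF σ' ∧ FPF φ' ∧ ∀ x : F, Nat.card (orbSet {θ, σ'} x) = 4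

def IsEdgeDeletion {F : Type*} (σ' φ' : Equiv.Perm F) (e : Set F)
    (θ₀ σ₀ φ₀ : Equiv.Perm {f : F // f ∉ e}) (θ : Equiv.Perm F) : Prop :=
  (∀ a : {f : F // f ∉ e}, (θ₀ a : F) = θ a ∧ (σ₀ a : F) = σ' a) ∧
  (∀ a : {f : F // f ∉ e}, ∃ m : ℕ,
     ((φ' * σ') ^ m) (φ' a) ∉ e ∧ (∀ j < m, ((φ' * σ') ^ j) (φ' a) ∈ e) ∧
     (φ₀ a : F) = ((φ' * σ') ^ m) (φ' a))

/-- `L` is a proper vertex labelling: constant on vertex orbits, and injective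
across distinct vertex orbits. -/
def IsLabelling {F : Type*} {t : ℕ} (σ' φ' : Equiv.Perm F) (L : F → Option (Fin t)) : Prop :=
  (∀ f : F, ∀ x ∈ orbSet {σ', φ'} f, L x = L f) ∧
  (∀ f f' : F, ∀ ℓ : Fin t, L f = some ℓ → L f' = some ℓ → f' ∈ orbSet {σ', φ'} f)

/-- Niceness of a `t`-boundaried embedding: every unlabelled vertex with fewer than
6 flags is isolated, and every edge incident with two faces has, on each incident
face, a labelled flag away from the edge's neighbourhood. -/
def IsNice {F : Type*} {t : ℕ} (θ σ' φ' : Equiv.Perm F) (L : F → Option (Fin t)) : Prop :=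
  (∀ f : F, L f = none → Nat.card (orbSet {σ', φ'} f) < 6 →
    orbSet {σ', φ'} f = orbSet {θ, σ', φ'} f) ∧
  (∀ y : F, Nat.card ((fun f => orbSet {θ, φ'} f) '' orbSet {θ, σ'} y) = 2 →
    ∃ z ∈ orbSet {θ, φ'} y, z ∉ ({y, θ y, φ' y, φ' (θ y)} : Set F) ∧ L z ≠ none)


section Helpers

open MulAction

variable {F : Type*}

lemma fpf_apply {π : Equiv.Perm F} (h : FPF π) (z : F) : π (π z) = z := by
  rw [← Equiv.Perm.mul_apply, h.1, Equiv.Perm.one_apply]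

lemma mem_orbSet_self (S : Set (Equiv.Perm F)) (x : F) : x ∈ orbSet S x :=
  MulAction.mem_orbit_self x

lemma perm_smul_mem_orbSet {S : Set (Equiv.Perm F)} {π : Equiv.Perm F} (hπ : π ∈ S)
    {x y : F} (hy : y ∈ orbSet S x) : π y ∈ orbSet S x := by
  obtain ⟨g, rfl⟩ := hy
  exact ⟨⟨π, Subgroup.subset_closure hπ⟩ * g, rfl⟩

lemma orbSet_eq_of_mem {S : Set (Equiv.Perm F)} {x y : F} (hy : y ∈ orbSet S x) :
    orbSet S y = orbSet S x :=
  MulAction.orbit_eq_iff.mpr hy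

lemma orbSet_subset_of_invariant {S : Set (Equiv.Perm F)} (hS : ∀ π ∈ S, π * π = 1) {T : Set F}
    (hT : ∀ π ∈ S, ∀ y ∈ T, π y ∈ T) {x : F} (hx : x ∈ T) : orbSet S x ⊆ T := by
  intro y hy
  obtain ⟨g, rfl⟩ := hy
  have key : ∀ g : Equiv.Perm F, g ∈ Subgroup.closure S → ∀ y : F, y ∈ T ↔ g y ∈ T := by
    intro g hg
    induction hg using Subgroup.closure_induction with
    | mem π hπ =>
        intro y
        constructor
        · exact hT π hπ y
        · intro hmem
          have h2 := hT π hπ _ hmem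
          have hinv : π (π y) = y := by
            rw [← Equiv.Perm.mul_apply, hS π hπ, Equiv.Perm.one_apply]
          exact hinv ▸ h2
    | one => intro y; simp
    | mul a b ha hb iha ihb =>
        intro y
        rw [Equiv.Perm.mul_apply]
        exact (ihb y).trans (iha _)
    | inv a ha iha =>
        intro y
        constructor
        · intro hy
          have := (iha (a⁻¹ y)).mpr
          simp at this
          exact this hy
        · intro hy
          have := (iha (a⁻¹ y)).mp hy
          simpa using this
  exact (key _ (SetLike.coe_mem g) x).mp hx

def qmk (S : Set (Equiv.Perm F)) (x : F) :
    MulAction.orbitRel.Quotient (Subgroup.closure S) F :=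
  Quotient.mk'' x

lemma qmk_eq_iff {S : Set (Equiv.Perm F)} {x y : F} :
    qmk S x = qmk S y ↔ x ∈ orbSet S y := by
  rw [qmk, qmk, Quotient.eq'']
  exact MulAction.orbitRel_apply

lemma qmk_surjective (S : Set (Equiv.Perm F)) : Function.Surjective (qmk S) := by
  intro q
  exact Quotient.inductionOn q (fun a => ⟨a, rfl⟩)

lemma card_le_pair [Finite F] {T : Set F} {p q : F} (h : T ⊆ {p, q}) : Nat.card T ≤ 2 := by
  rw [Nat.card_coe_set_eq]
  calc T.ncard ≤ ({p, q} : Set F).ncard := Set.ncard_le_ncard h (Set.toFinite _)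
    _ ≤ ({q} : Set F).ncard + 1 := Set.ncard_insert_le _ _
    _ ≤ 2 := by rw [Set.ncard_singleton]

lemma card_four {α : Type*} [Finite α] {a b c d : α} (hab : a ≠ b) (hac : a ≠ c) (had : a ≠ d)
    (hbc : b ≠ c) (hbd : b ≠ d) (hcd : c ≠ d) : Nat.card ({a, b, c, d} : Set α) = 4 := by
  rw [Nat.card_coe_set_eq,
      Set.ncard_insert_of_notMem (by simp [hab, hac, had]),
      Set.ncard_insert_of_notMem (by simp [hbc, hbd]),
      Set.ncard_insert_of_notMem (by simp [hcd]), Set.ncard_singleton]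

lemma count_helper {A Q : Type*} [Finite Q] (c : Q) (f : A → {q : Q // q ≠ c})
    (hbij : Function.Bijective f) : Nat.card A + 1 = Nat.card Q := by
  classical
  rw [Nat.card_eq_of_bijective f hbij]
  have : Fintype Q := Fintype.ofFinite Q
  rw [Nat.card_eq_fintype_card, Nat.card_eq_fintype_card]
  have h1 : Fintype.card {q : Q // q ≠ c} = Fintype.card Q - 1 := by
    have : Fintype.card {q : Q // ¬(q = c)} = Fintype.card Q - Fintype.card {q : Q // q = c} :=
      Fintype.card_subtype_compl _
    rw [Fintype.card_subtype_eq] at this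
    exact this
  have h2 : 1 ≤ Fintype.card Q := Fintype.card_pos_iff.mpr ⟨c⟩
  omega

lemma orbit4 [Finite F] {s f : Equiv.Perm F} (hs : FPF s) (hf : FPF f) {x : F}
    (hcard : Nat.card (orbSet {s, f} x) = 4) :
    s x ≠ f x ∧ f (s x) = s (f x) ∧ orbSet {s, f} x = {x, s x, f x, s (f x)} := by
  have hsmem : s ∈ ({s, f} : Set (Equiv.Perm F)) := Set.mem_insert _ _
  have hfmem : f ∈ ({s, f} : Set (Equiv.Perm F)) := Set.mem_insert_of_mem _ rfl
  have hinv : ∀ π ∈ ({s, f} : Set (Equiv.Perm F)), π * π = 1 := by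
    rintro π hπ
    simp only [Set.mem_insert_iff, Set.mem_singleton_iff] at hπ
    rcases hπ with rfl | rfl
    exacts [hs.1, hf.1]
  -- step 1 : s x ≠ f x
  have h1 : s x ≠ f x := by
    intro heq
    have hsub : orbSet {s, f} x ⊆ {x, s x} := by
      apply orbSet_subset_of_invariant hinv ?_ (Set.mem_insert _ _)
      intro π hπ y hy
      simp only [Set.mem_insert_iff, Set.mem_singleton_iff] at hπ hy ⊢
      rcases hπ with hπ | hπ <;> rcases hy with hy | hy <;> rw [hπ, hy]
      · exact Or.inr rfl
      · exact Or.inl (fpf_apply hs x)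
      · exact Or.inr heq.symm
      · exact Or.inl (by rw [heq, fpf_apply hf])
    have := card_le_pair hsub
    omega
  -- step 2 : commuting on the orbit
  have h2 : f (s x) = s (f x) := by
    by_contra h2
    have n_xsx : x ≠ s x := fun e => hs.2 x e.symm
    have n_xfx : x ≠ f x := fun e => hf.2 x e.symm
    have n_xsfx : x ≠ s (f x) := fun e => h1 ((congrArg s e).trans (fpf_apply hs (f x)))
    have n_xfsx : x ≠ f (s x) := fun e => h1 ((congrArg f e).trans (fpf_apply hf (s x))).symm
    have n_sxsfx : s x ≠ s (f x) := fun e => n_xfx (s.injective e)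
    have n_sxfsx : s x ≠ f (s x) := fun e => hf.2 (s x) e.symm
    have n_fxsfx : f x ≠ s (f x) := fun e => hs.2 (f x) e.symm
    have n_fxfsx : f x ≠ f (s x) := fun e => n_xsx (f.injective e)
    have n_sfxfsx : s (f x) ≠ f (s x) := fun e => h2 e.symm
    have hsub5 : ({x, s x, f x, s (f x), f (s x)} : Set F) ⊆ orbSet {s, f} x := by
      intro y hy
      simp only [Set.mem_insert_iff, Set.mem_singleton_iff] at hy
      have hx0 := mem_orbSet_self ({s, f} : Set (Equiv.Perm F)) x
      rcases hy with hy | hy | hy | hy | hy <;> rw [hy]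
      · exact hx0
      · exact perm_smul_mem_orbSet hsmem hx0
      · exact perm_smul_mem_orbSet hfmem hx0
      · exact perm_smul_mem_orbSet hsmem (perm_smul_mem_orbSet hfmem hx0)
      · exact perm_smul_mem_orbSet hfmem (perm_smul_mem_orbSet hsmem hx0)
    have h5 : ({x, s x, f x, s (f x), f (s x)} : Set F).ncard = 5 := by
      rw [Set.ncard_insert_of_notMem (by simp [n_xsx, n_xfx, n_xsfx, n_xfsx]),
          Set.ncard_insert_of_notMem (by simp [h1, n_sxsfx, n_sxfsx]),
          Set.ncard_insert_of_notMem (by simp [n_fxsfx, n_fxfsx]),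
          Set.ncard_insert_of_notMem (by simp [n_sfxfsx]), Set.ncard_singleton]
    have hle : (5 : ℕ) ≤ Nat.card (orbSet {s, f} x) := by
      rw [Nat.card_coe_set_eq]
      calc (5 : ℕ) = ({x, s x, f x, s (f x), f (s x)} : Set F).ncard := h5.symm
        _ ≤ (orbSet {s, f} x).ncard := Set.ncard_le_ncard hsub5 (Set.toFinite _)
    omega
  refine ⟨h1, h2, ?_⟩
  apply Set.Subset.antisymm
  · apply orbSet_subset_of_invariant hinv ?_ (Set.mem_insert _ _)
    intro π hπ y hy
    simp only [Set.mem_insert_iff, Set.mem_singleton_iff] at hπ hy ⊢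
    rcases hπ with hπ | hπ <;> rcases hy with hy | hy | hy | hy <;> rw [hπ, hy]
    · exact Or.inr (Or.inl rfl)
    · exact Or.inl (fpf_apply hs x)
    · exact Or.inr (Or.inr (Or.inr rfl))
    · exact Or.inr (Or.inr (Or.inl (fpf_apply hs (f x))))
    · exact Or.inr (Or.inr (Or.inl rfl))
    · exact Or.inr (Or.inr (Or.inr h2))
    · exact Or.inl (fpf_apply hf x)
    · exact Or.inr (Or.inl (by rw [← h2, fpf_apply hf]))
  · intro y hy
    simp only [Set.mem_insert_iff, Set.mem_singleton_iff] at hy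
    have hx0 := mem_orbSet_self ({s, f} : Set (Equiv.Perm F)) x
    rcases hy with hy | hy | hy | hy <;> rw [hy]
    · exact hx0
    · exact perm_smul_mem_orbSet hsmem hx0
    · exact perm_smul_mem_orbSet hfmem hx0
    · exact perm_smul_mem_orbSet hsmem (perm_smul_mem_orbSet hfmem hx0)

end Helpers

set_option maxHeartbeats 1000000 in
theorem stmt17 {F : Type*} [Fintype F] {t : ℕ}
    (θ σ' φ' : Equiv.Perm F) (h : IsGraphEmb θ σ' φ')
    (L : F → Option (Fin t)) (hL : IsLabelling σ' φ' L)
    (x₁ : F) (u : Set F) (hu : u = orbSet {σ', φ'} x₁)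
    (hunlab : L x₁ = none)
    (hsize : Nat.card u = 4)
    (hnotiso : u ≠ orbSet {θ, σ', φ'} x₁)
    (hedges : orbSet {θ, σ'} x₁ ≠ orbSet {θ, σ'} (φ' x₁))
    (θ' σ'' φ'' : Equiv.Perm {f : F // f ∉ u})
    (hσ : ∀ a : {f : F // f ∉ u}, (σ'' a : F) = σ' a)
    (hφ : ∀ a : {f : F // f ∉ u}, (φ'' a : F) = φ' a)
    (hθ : ∀ a : {f : F // f ∉ u},
      (θ (a : F) ∉ u → (θ' a : F) = θ a) ∧
      (θ (a : F) ∈ u → (θ' a : F) = θ (φ' (θ a)))) :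
    IsGraphEmb θ' σ'' φ'' ∧
    orbCount {σ'', φ''} + 1 = orbCount {σ', φ'} ∧
    orbCount {θ', σ''} + 1 = orbCount {θ, σ'} := by
  classical
  obtain ⟨hθF, hsF, hfF, hE4⟩ := h
  have invθ := fpf_apply hθF
  have invs := fpf_apply hsF
  have invf := fpf_apply hfF
  have hθm : θ ∈ ({θ, σ'} : Set (Equiv.Perm F)) := Set.mem_insert _ _
  have hσm : σ' ∈ ({θ, σ'} : Set (Equiv.Perm F)) := Set.mem_insert_of_mem _ rfl
  have hσmV : σ' ∈ ({σ', φ'} : Set (Equiv.Perm F)) := Set.mem_insert _ _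
  have hφmV : φ' ∈ ({σ', φ'} : Set (Equiv.Perm F)) := Set.mem_insert_of_mem _ rfl
  -- structure of the vertex orbit
  have hvcard : Nat.card (orbSet {σ', φ'} x₁) = 4 := by rw [← hu]; exact hsize
  obtain ⟨hv1, hv2, hvdesc⟩ := orbit4 hsF hfF hvcard
  obtain ⟨x₂, hx₂⟩ : ∃ w, w = φ' x₁ := ⟨_, rfl⟩
  have huset : u = {x₁, σ' x₁, x₂, σ' x₂} := by rw [hu, hvdesc, hx₂]
  -- structure of edges
  have hecomm : ∀ z, σ' (θ z) = θ (σ' z) := fun z => (orbit4 hθF hsF (hE4 z)).2.1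
  have hedesc : ∀ z, orbSet {θ, σ'} z = {z, θ z, σ' z, θ (σ' z)} :=
    fun z => (orbit4 hθF hsF (hE4 z)).2.2
  have hθσne : ∀ z, θ z ≠ σ' z := fun z => (orbit4 hθF hsF (hE4 z)).1
  -- Klein four values on u
  have hfx₂ : φ' x₂ = x₁ := by rw [hx₂, invf]
  have hfsx₁ : φ' (σ' x₁) = σ' x₂ := by rw [hv2, hx₂]
  have hfsx₂ : φ' (σ' x₂) = σ' x₁ := by rw [← hfsx₁, invf]
  -- u memberships
  have hx₁u : x₁ ∈ u := by rw [huset]; exact Set.mem_insert _ _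
  have hsx₁u : σ' x₁ ∈ u := by rw [huset]; simp
  have hx₂u : x₂ ∈ u := by rw [huset]; simp
  have hsx₂u : σ' x₂ ∈ u := by rw [huset]; simp
  -- basic distinctness inside u
  have dx12 : x₁ ≠ x₂ := by rw [hx₂]; exact fun e => hfF.2 x₁ e.symm
  have dsx₁x₂ : σ' x₁ ≠ x₂ := by
    intro e
    have hsub : u ⊆ {x₁, σ' x₁} := by
      rw [huset]
      intro z hz
      simp only [Set.mem_insert_iff, Set.mem_singleton_iff] at hz ⊢
      rcases hz with hz | hz | hz | hz
      · exact Or.inl hz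
      · exact Or.inr hz
      · exact Or.inr (hz.trans e.symm)
      · exact Or.inl (by rw [hz, ← e, invs])
    have := card_le_pair hsub
    omega
  have dx₁sx₂ : x₁ ≠ σ' x₂ := fun e => dsx₁x₂ (by rw [e, invs])
  -- edge memberships
  have m_x₁e₁ : x₁ ∈ orbSet {θ, σ'} x₁ := mem_orbSet_self _ _
  have m_x₂e₂ : x₂ ∈ orbSet {θ, σ'} x₂ := mem_orbSet_self _ _
  have m_y₁e₁ : θ x₁ ∈ orbSet {θ, σ'} x₁ := perm_smul_mem_orbSet hθm m_x₁e₁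
  have m_sy₁e₁ : σ' (θ x₁) ∈ orbSet {θ, σ'} x₁ := perm_smul_mem_orbSet hσm m_y₁e₁
  have m_sx₁e₁ : σ' x₁ ∈ orbSet {θ, σ'} x₁ := perm_smul_mem_orbSet hσm m_x₁e₁
  have m_y₂e₂ : θ x₂ ∈ orbSet {θ, σ'} x₂ := perm_smul_mem_orbSet hθm m_x₂e₂
  have m_sy₂e₂ : σ' (θ x₂) ∈ orbSet {θ, σ'} x₂ := perm_smul_mem_orbSet hσm m_y₂e₂
  have m_sx₂e₂ : σ' x₂ ∈ orbSet {θ, σ'} x₂ := perm_smul_mem_orbSet hσm m_x₂e₂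
  have hdisj : ∀ z, z ∈ orbSet {θ, σ'} x₁ → z ∈ orbSet {θ, σ'} x₂ → False := by
    intro z h1 h2
    apply hedges
    rw [← hx₂, ← orbSet_eq_of_mem h1, orbSet_eq_of_mem h2]
  -- θ-images of u avoid u
  have hy₁u : θ x₁ ∉ u := by
    rw [huset]
    intro hmem
    simp only [Set.mem_insert_iff, Set.mem_singleton_iff] at hmem
    rcases hmem with e | e | e | e
    · exact hθF.2 x₁ e
    · exact hθσne x₁ e
    · exact hdisj _ m_y₁e₁ (by rw [e]; exact m_x₂e₂)
    · exact hdisj _ m_y₁e₁ (by rw [e]; exact m_sx₂e₂)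
  have hy₂u : θ x₂ ∉ u := by
    rw [huset]
    intro hmem
    simp only [Set.mem_insert_iff, Set.mem_singleton_iff] at hmem
    rcases hmem with e | e | e | e
    · exact hdisj _ m_x₁e₁ (by rw [← e]; exact m_y₂e₂)
    · exact hdisj _ m_sx₁e₁ (by rw [← e]; exact m_y₂e₂)
    · exact hθF.2 x₂ e
    · exact hθσne x₂ e
  have hu_σclosed : ∀ z ∈ u, σ' z ∈ u := by
    rw [hu]; exact fun z hz => perm_smul_mem_orbSet hσmV hz
  have hu_φclosed : ∀ z ∈ u, φ' z ∈ u := by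
    rw [hu]; exact fun z hz => perm_smul_mem_orbSet hφmV hz
  have hsy₁u : σ' (θ x₁) ∉ u := fun hm =>
    hy₁u (by rw [← invs (θ x₁)]; exact hu_σclosed _ hm)
  have hsy₂u : σ' (θ x₂) ∉ u := fun hm =>
    hy₂u (by rw [← invs (θ x₂)]; exact hu_σclosed _ hm)
  -- distinctness of the four outer flags
  have n1 : θ x₁ ≠ σ' (θ x₁) := fun e => hsF.2 (θ x₁) e.symm
  have n6 : θ x₂ ≠ σ' (θ x₂) := fun e => hsF.2 (θ x₂) e.symm
  have n2 : θ x₁ ≠ θ x₂ := fun e => dx12 (θ.injective e)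
  have n3 : θ x₁ ≠ σ' (θ x₂) := fun e => dx₁sx₂ (θ.injective (by rw [e, hecomm]))
  have n4 : σ' (θ x₁) ≠ θ x₂ := fun e => dsx₁x₂ (θ.injective (by rw [← hecomm]; exact e))
  have n5 : σ' (θ x₁) ≠ σ' (θ x₂) := fun e => n2 (σ'.injective e)
  -- the four outer flags as elements of the subtype
  obtain ⟨Y₁, hY₁⟩ : ∃ a : {f : F // f ∉ u}, (a : F) = θ x₁ := ⟨⟨θ x₁, hy₁u⟩, rfl⟩
  obtain ⟨SY₁, hSY₁⟩ : ∃ a : {f : F // f ∉ u}, (a : F) = σ' (θ x₁) := ⟨⟨_, hsy₁u⟩, rfl⟩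
  obtain ⟨Y₂, hY₂⟩ : ∃ a : {f : F // f ∉ u}, (a : F) = θ x₂ := ⟨⟨_, hy₂u⟩, rfl⟩
  obtain ⟨SY₂, hSY₂⟩ : ∃ a : {f : F // f ∉ u}, (a : F) = σ' (θ x₂) := ⟨⟨_, hsy₂u⟩, rfl⟩
  -- FPF for the new permutations
  have hσ''sq : σ'' * σ'' = 1 := by
    apply Equiv.ext; intro a
    rw [Equiv.Perm.mul_apply, Equiv.Perm.one_apply]
    apply Subtype.ext
    rw [hσ, hσ, invs]
  have hσ''fpf : FPF σ'' := ⟨hσ''sq, fun a e => hsF.2 (a : F) (by rw [← hσ a, e])⟩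
  have hφ''sq : φ'' * φ'' = 1 := by
    apply Equiv.ext; intro a
    rw [Equiv.Perm.mul_apply, Equiv.Perm.one_apply]
    apply Subtype.ext
    rw [hφ, hφ, invf]
  have hφ''fpf : FPF φ'' := ⟨hφ''sq, fun a e => hfF.2 (a : F) (by rw [← hφ a, e])⟩
  have hθ'val : ∀ a : {f : F // f ∉ u}, (θ' (θ' a) : F) = (a : F) := by
    intro a
    by_cases hcase : θ (a : F) ∈ u
    · have h1 : (θ' a : F) = θ (φ' (θ (a : F))) := (hθ a).2 hcase
      have h2 : θ ((θ' a : F)) = φ' (θ (a : F)) := by rw [h1, invθ]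
      have h3 : θ ((θ' a : F)) ∈ u := by rw [h2]; exact hu_φclosed _ hcase
      rw [(hθ (θ' a)).2 h3, h2, invf, invθ]
    · have h1 : (θ' a : F) = θ (a : F) := (hθ a).1 hcase
      have h3 : θ ((θ' a : F)) ∉ u := by rw [h1, invθ]; exact a.2
      rw [(hθ (θ' a)).1 h3, h1, invθ]
  have hθ'sq : θ' * θ' = 1 := by
    apply Equiv.ext; intro a
    rw [Equiv.Perm.mul_apply, Equiv.Perm.one_apply]
    exact Subtype.ext (hθ'val a)
  have hθ'fpf : FPF θ' := by
    refine ⟨hθ'sq, fun a e => ?_⟩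
    by_cases hcase : θ (a : F) ∈ u
    · have h1 : (θ' a : F) = θ (φ' (θ (a : F))) := (hθ a).2 hcase
      rw [e] at h1
      apply hfF.2 (θ (a : F))
      rw [← invθ (φ' (θ (a : F))), ← h1]
    · exact hθF.2 (a : F) (by rw [← (hθ a).1 hcase, e])
  -- θ' values on the four outer flags
  have hθ'Y₁ : (θ' Y₁ : F) = θ x₂ := by
    have hc : θ (Y₁ : F) ∈ u := by rw [hY₁, invθ]; exact hx₁u
    rw [(hθ Y₁).2 hc, hY₁, invθ, ← hx₂]
  have hθ'Y₂ : (θ' Y₂ : F) = θ x₁ := by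
    have hc : θ (Y₂ : F) ∈ u := by rw [hY₂, invθ]; exact hx₂u
    rw [(hθ Y₂).2 hc, hY₂, invθ, hfx₂]
  have hθ'SY₁ : (θ' SY₁ : F) = σ' (θ x₂) := by
    have hc : θ (SY₁ : F) ∈ u := by rw [hSY₁, ← hecomm, invθ]; exact hsx₁u
    rw [(hθ SY₁).2 hc, hSY₁, ← hecomm, invθ, hfsx₁, ← hecomm]
  have hθ'SY₂ : (θ' SY₂ : F) = σ' (θ x₁) := by
    have hc : θ (SY₂ : F) ∈ u := by rw [hSY₂, ← hecomm, invθ]; exact hsx₂u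
    rw [(hθ SY₂).2 hc, hSY₂, ← hecomm, invθ, hfsx₂, ← hecomm]
  have eθY₁ : θ' Y₁ = Y₂ := Subtype.ext (by rw [hθ'Y₁, hY₂])
  have eθY₂ : θ' Y₂ = Y₁ := Subtype.ext (by rw [hθ'Y₂, hY₁])
  have eθSY₁ : θ' SY₁ = SY₂ := Subtype.ext (by rw [hθ'SY₁, hSY₂])
  have eθSY₂ : θ' SY₂ = SY₁ := Subtype.ext (by rw [hθ'SY₂, hSY₁])
  have eσY₁ : σ'' Y₁ = SY₁ := Subtype.ext (by rw [hσ, hY₁, hSY₁])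
  have eσSY₁ : σ'' SY₁ = Y₁ := Subtype.ext (by rw [hσ, hSY₁, invs, hY₁])
  have eσY₂ : σ'' Y₂ = SY₂ := Subtype.ext (by rw [hσ, hY₂, hSY₂])
  have eσSY₂ : σ'' SY₂ = Y₂ := Subtype.ext (by rw [hσ, hSY₂, invs, hY₂])
  -- generator sets
  have hθ'm : θ' ∈ ({θ', σ''} : Set (Equiv.Perm {f : F // f ∉ u})) := Set.mem_insert _ _
  have hσ''m : σ'' ∈ ({θ', σ''} : Set (Equiv.Perm {f : F // f ∉ u})) :=
    Set.mem_insert_of_mem _ rfl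
  have hinvE : ∀ π ∈ ({θ', σ''} : Set (Equiv.Perm {f : F // f ∉ u})), π * π = 1 := by
    intro π hπ
    simp only [Set.mem_insert_iff, Set.mem_singleton_iff] at hπ
    rcases hπ with hπ | hπ <;> rw [hπ]
    exacts [hθ'sq, hσ''sq]
  have hinvV : ∀ π ∈ ({σ'', φ''} : Set (Equiv.Perm {f : F // f ∉ u})), π * π = 1 := by
    intro π hπ
    simp only [Set.mem_insert_iff, Set.mem_singleton_iff] at hπ
    rcases hπ with hπ | hπ <;> rw [hπ]
    exacts [hσ''sq, hφ''sq]
  have hσ''mV : σ'' ∈ ({σ'', φ''} : Set (Equiv.Perm {f : F // f ∉ u})) := Set.mem_insert _ _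
  have hφ''mV : φ'' ∈ ({σ'', φ''} : Set (Equiv.Perm {f : F // f ∉ u})) :=
    Set.mem_insert_of_mem _ rfl
  have hinvVF : ∀ π ∈ ({σ', φ'} : Set (Equiv.Perm F)), π * π = 1 := by
    intro π hπ
    simp only [Set.mem_insert_iff, Set.mem_singleton_iff] at hπ
    rcases hπ with hπ | hπ <;> rw [hπ]
    exacts [hsF.1, hfF.1]
  have hinvEF : ∀ π ∈ ({θ, σ'} : Set (Equiv.Perm F)), π * π = 1 := by
    intro π hπ
    simp only [Set.mem_insert_iff, Set.mem_singleton_iff] at hπ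
    rcases hπ with hπ | hπ <;> rw [hπ]
    exacts [hθF.1, hsF.1]
  -- the merged edge
  have horbY₁ : orbSet {θ', σ''} Y₁ = {Y₁, SY₁, Y₂, SY₂} := by
    apply Set.Subset.antisymm
    · apply orbSet_subset_of_invariant hinvE ?_ (Set.mem_insert _ _)
      intro π hπ b hb
      simp only [Set.mem_insert_iff, Set.mem_singleton_iff] at hπ hb ⊢
      rcases hπ with hπ | hπ <;> rcases hb with hb | hb | hb | hb <;> rw [hπ, hb]
      · exact Or.inr (Or.inr (Or.inl eθY₁))
      · exact Or.inr (Or.inr (Or.inr eθSY₁))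
      · exact Or.inl eθY₂
      · exact Or.inr (Or.inl eθSY₂)
      · exact Or.inr (Or.inl eσY₁)
      · exact Or.inl eσSY₁
      · exact Or.inr (Or.inr (Or.inr eσY₂))
      · exact Or.inr (Or.inr (Or.inl eσSY₂))
    · intro b hb
      simp only [Set.mem_insert_iff, Set.mem_singleton_iff] at hb
      have h0 := mem_orbSet_self ({θ', σ''} : Set (Equiv.Perm {f : F // f ∉ u})) Y₁
      rcases hb with hb | hb | hb | hb <;> rw [hb]
      · exact h0
      · rw [← eσY₁]; exact perm_smul_mem_orbSet hσ''m h0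
      · rw [← eθY₁]; exact perm_smul_mem_orbSet hθ'm h0
      · rw [← eσY₂, ← eθY₁]
        exact perm_smul_mem_orbSet hσ''m (perm_smul_mem_orbSet hθ'm h0)
  have N12 : Y₁ ≠ SY₁ := fun e => n1 (by rw [← hSY₁, ← hY₁, e])
  have N13 : Y₁ ≠ Y₂ := fun e => n2 (by rw [← hY₁, ← hY₂, e])
  have N14 : Y₁ ≠ SY₂ := fun e => n3 (by rw [← hSY₂, ← hY₁, e])
  have N23 : SY₁ ≠ Y₂ := fun e => n4 (by rw [← hSY₁, ← hY₂, e])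
  have N24 : SY₁ ≠ SY₂ := fun e => n5 (by rw [← hSY₁, ← hSY₂, e])
  have N34 : Y₂ ≠ SY₂ := fun e => n6 (by rw [← hSY₂, ← hY₂, e])
  -- orbits away from the two edges avoid u
  have hOrbAvoid : ∀ z : F, z ∉ orbSet {θ, σ'} x₁ → z ∉ orbSet {θ, σ'} x₂ →
      ∀ w ∈ orbSet {θ, σ'} z, w ∉ u := by
    intro z h1 h2 w hw hwu
    have hz : z ∈ orbSet {θ, σ'} w := by
      rw [orbSet_eq_of_mem hw]; exact mem_orbSet_self _ _
    rw [huset] at hwu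
    simp only [Set.mem_insert_iff, Set.mem_singleton_iff] at hwu
    rcases hwu with e | e | e | e <;> rw [e] at hz
    · exact h1 hz
    · rw [orbSet_eq_of_mem m_sx₁e₁] at hz; exact h1 hz
    · exact h2 hz
    · rw [orbSet_eq_of_mem m_sx₂e₂] at hz; exact h2 hz
  have hpre : ∀ d : {f : F // f ∉ u}, (d : F) ∉ orbSet {θ, σ'} x₁ →
      (d : F) ∉ orbSet {θ, σ'} x₂ →
      orbSet {θ', σ''} d ⊆ {b : {f : F // f ∉ u} | (b : F) ∈ orbSet {θ, σ'} (d : F)} := by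
    intro d hd1 hd2
    refine orbSet_subset_of_invariant hinvE ?_ (show (d : F) ∈ orbSet {θ, σ'} (d : F) from mem_orbSet_self _ _)
    intro π hπ b hb
    simp only [Set.mem_insert_iff, Set.mem_singleton_iff] at hπ
    simp only [Set.mem_setOf_eq] at hb ⊢
    rcases hπ with hπ | hπ <;> rw [hπ]
    · have hnb : θ (b : F) ∉ u :=
        hOrbAvoid _ hd1 hd2 _ (perm_smul_mem_orbSet hθm hb)
      rw [(hθ b).1 hnb]
      exact perm_smul_mem_orbSet hθm hb
    · rw [hσ b]
      exact perm_smul_mem_orbSet hσm hb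
  have mem4E₁ : ∀ a : {f : F // f ∉ u}, (a : F) ∈ orbSet {θ, σ'} x₁ →
      a ∈ ({Y₁, SY₁, Y₂, SY₂} : Set {f : F // f ∉ u}) := by
    intro a ha
    rw [hedesc x₁] at ha
    simp only [Set.mem_insert_iff, Set.mem_singleton_iff] at ha ⊢
    rcases ha with e | e | e | e
    · exact absurd (by rw [e]; exact hx₁u) a.2
    · exact Or.inl (Subtype.ext (by rw [e, hY₁]))
    · exact absurd (by rw [e]; exact hsx₁u) a.2
    · exact Or.inr (Or.inl (Subtype.ext (by rw [e, hSY₁, hecomm])))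
  have mem4E₂ : ∀ a : {f : F // f ∉ u}, (a : F) ∈ orbSet {θ, σ'} x₂ →
      a ∈ ({Y₁, SY₁, Y₂, SY₂} : Set {f : F // f ∉ u}) := by
    intro a ha
    rw [hedesc x₂] at ha
    simp only [Set.mem_insert_iff, Set.mem_singleton_iff] at ha ⊢
    rcases ha with e | e | e | e
    · exact absurd (by rw [e]; exact hx₂u) a.2
    · exact Or.inr (Or.inr (Or.inl (Subtype.ext (by rw [e, hY₂]))))
    · exact absurd (by rw [e]; exact hsx₂u) a.2
    · exact Or.inr (Or.inr (Or.inr (Subtype.ext (by rw [e, hSY₂, hecomm]))))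
  have hmut : ∀ c ∈ ({Y₁, SY₁, Y₂, SY₂} : Set {f : F // f ∉ u}),
      ∀ d ∈ ({Y₁, SY₁, Y₂, SY₂} : Set {f : F // f ∉ u}), c ∈ orbSet {θ', σ''} d := by
    intro c hc d hd
    have hd' : d ∈ orbSet {θ', σ''} Y₁ := by rw [horbY₁]; exact hd
    rw [orbSet_eq_of_mem hd', horbY₁]
    exact hc
  -- every new edge has exactly four flags
  have hcard4 : ∀ a : {f : F // f ∉ u}, Nat.card (orbSet {θ', σ''} a) = 4 := by
    intro a
    by_cases hae : (a : F) ∈ orbSet {θ, σ'} x₁ ∨ (a : F) ∈ orbSet {θ, σ'} x₂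
    · have hmem : a ∈ ({Y₁, SY₁, Y₂, SY₂} : Set {f : F // f ∉ u}) := by
        rcases hae with hae | hae
        · exact mem4E₁ a hae
        · exact mem4E₂ a hae
      have horba : orbSet {θ', σ''} a = {Y₁, SY₁, Y₂, SY₂} := by
        rw [orbSet_eq_of_mem (show a ∈ orbSet {θ', σ''} Y₁ by rw [horbY₁]; exact hmem), horbY₁]
      rw [horba]
      exact card_four N12 N13 N14 N23 N24 N34
    · push_neg at hae
      have havoid := hOrbAvoid (a : F) hae.1 hae.2
      have hsub := hpre a hae.1 hae.2
      have hva : (θ' a : F) = θ (a : F) :=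
        (hθ a).1 (havoid _ (perm_smul_mem_orbSet hθm (mem_orbSet_self _ _)))
      have hvsa : (σ'' a : F) = σ' (a : F) := hσ a
      have hvsθa : (σ'' (θ' a) : F) = σ' (θ (a : F)) := by rw [hσ, hva]
      have horba : orbSet {θ', σ''} a = {a, θ' a, σ'' a, σ'' (θ' a)} := by
        apply Set.Subset.antisymm
        · intro b hb
          have hbv := hsub hb
          simp only [Set.mem_setOf_eq] at hbv
          rw [hedesc (a : F)] at hbv
          simp only [Set.mem_insert_iff, Set.mem_singleton_iff] at hbv ⊢
          rcases hbv with e | e | e | e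
          · exact Or.inl (Subtype.ext e)
          · exact Or.inr (Or.inl (Subtype.ext (by rw [e, hva])))
          · exact Or.inr (Or.inr (Or.inl (Subtype.ext (by rw [e, hvsa]))))
          · exact Or.inr (Or.inr (Or.inr (Subtype.ext (by rw [e, hvsθa, hecomm]))))
        · intro b hb
          simp only [Set.mem_insert_iff, Set.mem_singleton_iff] at hb
          have h0 := mem_orbSet_self ({θ', σ''} : Set (Equiv.Perm {f : F // f ∉ u})) a
          rcases hb with hb | hb | hb | hb <;> rw [hb]
          · exact h0
          · exact perm_smul_mem_orbSet hθ'm h0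
          · exact perm_smul_mem_orbSet hσ''m h0
          · exact perm_smul_mem_orbSet hσ''m (perm_smul_mem_orbSet hθ'm h0)
      rw [horba]
      apply card_four
      · exact fun e => hθF.2 (a : F) (by rw [← hva, ← e])
      · exact fun e => hsF.2 (a : F) (by rw [← hvsa, ← e])
      · exact fun e => hθσne (a : F) (by rw [← invs (θ ((a : F))), ← hvsθa, ← e])
      · exact fun e => hθσne (a : F) (by rw [← hva, ← hvsa, e])
      · exact fun e => hsF.2 (θ (a : F)) (by rw [← hvsθa, ← e, hva])
      · exact fun e => hθF.2 (a : F)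
          (σ'.injective (show σ' (θ (a : F)) = σ' (a : F) by rw [← hvsθa, ← e, hvsa]))
  -- vertex-orbit transfer
  have TL1 : ∀ a b : {f : F // f ∉ u}, b ∈ orbSet {σ'', φ''} a →
      (b : F) ∈ orbSet {σ', φ'} (a : F) := by
    intro a b hb
    have hsub : orbSet {σ'', φ''} a ⊆
        {c : {f : F // f ∉ u} | (c : F) ∈ orbSet {σ', φ'} (a : F)} := by
      refine orbSet_subset_of_invariant hinvV ?_ (show ((a : F)) ∈ orbSet {σ', φ'} (a : F) from mem_orbSet_self _ _)
      intro π hπ c hc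
      simp only [Set.mem_insert_iff, Set.mem_singleton_iff] at hπ
      simp only [Set.mem_setOf_eq] at hc ⊢
      rcases hπ with hπ | hπ <;> rw [hπ]
      · rw [hσ c]; exact perm_smul_mem_orbSet hσmV hc
      · rw [hφ c]; exact perm_smul_mem_orbSet hφmV hc
    exact hsub hb
  have TL2 : ∀ a b : {f : F // f ∉ u}, (b : F) ∈ orbSet {σ', φ'} (a : F) →
      b ∈ orbSet {σ'', φ''} a := by
    intro a b hb
    have hsub : orbSet {σ', φ'} (a : F) ⊆ Subtype.val '' orbSet {σ'', φ''} a := by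
      refine orbSet_subset_of_invariant hinvVF ?_
        (show (a : F) ∈ Subtype.val '' orbSet {σ'', φ''} a from ⟨a, mem_orbSet_self _ _, rfl⟩)
      rintro π hπ y ⟨c, hc, rfl⟩
      simp only [Set.mem_insert_iff, Set.mem_singleton_iff] at hπ
      rcases hπ with hπ | hπ <;> rw [hπ]
      · refine ⟨σ'' c, ?_, ?_⟩
        · exact perm_smul_mem_orbSet hσ''mV hc
        · exact hσ c
      · refine ⟨φ'' c, ?_, ?_⟩
        · exact perm_smul_mem_orbSet hφ''mV hc
        · exact hφ c
    obtain ⟨c, hc, hcv⟩ := hsub hb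
    have hcb : c = b := Subtype.ext hcv
    subst hcb
    exact hc
  -- the vertex count
  have hVcount : orbCount {σ'', φ''} + 1 = orbCount {σ', φ'} := by
    have hne : ∀ a : {f : F // f ∉ u}, qmk {σ', φ'} (a : F) ≠ qmk {σ', φ'} x₁ := by
      intro a e
      have hin := qmk_eq_iff.mp e
      rw [← hu] at hin
      exact a.2 hin
    have vsound : ∀ (a b : {f : F // f ∉ u}),
        MulAction.orbitRel (Subgroup.closure {σ'', φ''}) {f : F // f ∉ u} a b →
        (⟨qmk {σ', φ'} (a : F), hne a⟩ : {q // q ≠ qmk {σ', φ'} x₁}) =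
          ⟨qmk {σ', φ'} (b : F), hne b⟩ := by
      intro a b hab
      have hab' : a ∈ orbSet {σ'', φ''} b := MulAction.orbitRel_apply.mp hab
      exact Subtype.ext (qmk_eq_iff.mpr (TL1 b a hab'))
    apply count_helper (qmk {σ', φ'} x₁)
      (Quotient.lift (fun a : {f : F // f ∉ u} =>
        (⟨qmk {σ', φ'} (a : F), hne a⟩ : {q // q ≠ qmk {σ', φ'} x₁})) vsound)
    constructor
    · intro p q hpq
      obtain ⟨a, rfl⟩ := qmk_surjective _ p
      obtain ⟨b, rfl⟩ := qmk_surjective _ q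
      have h1 : qmk {σ', φ'} (a : F) = qmk {σ', φ'} (b : F) := congrArg Subtype.val hpq
      exact qmk_eq_iff.mpr (TL2 b a (qmk_eq_iff.mp h1))
    · rintro ⟨q, hq⟩
      obtain ⟨y, rfl⟩ := qmk_surjective _ q
      have hyu : y ∉ u := by
        intro hy
        exact hq (qmk_eq_iff.mpr (by rw [hu] at hy; exact hy))
      exact ⟨qmk {σ'', φ''} ⟨y, hyu⟩, Subtype.ext rfl⟩
  -- the normalisation map ρ
  obtain ⟨ρ, hρ₁, hρ₂⟩ : ∃ ρ : F → F, (∀ z ∈ orbSet {θ, σ'} x₂, ρ z = θ (φ' (θ z))) ∧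
      (∀ z, z ∉ orbSet {θ, σ'} x₂ → ρ z = z) :=
    ⟨fun z => if z ∈ orbSet {θ, σ'} x₂ then θ (φ' (θ z)) else z,
      fun z hz => if_pos hz, fun z hz => if_neg hz⟩
  have hρy₁ : ρ (θ x₁) = θ x₁ := hρ₂ _ (fun hm => hdisj _ m_y₁e₁ hm)
  have hρsy₁ : ρ (σ' (θ x₁)) = σ' (θ x₁) := hρ₂ _ (fun hm => hdisj _ m_sy₁e₁ hm)
  have hρy₂ : ρ (θ x₂) = θ x₁ := by rw [hρ₁ _ m_y₂e₂, invθ, hfx₂]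
  have hρsy₂ : ρ (σ' (θ x₂)) = σ' (θ x₁) := by
    rw [hρ₁ _ m_sy₂e₂, ← hecomm, invθ, hfsx₂, ← hecomm]
  have hρcases : ∀ a : {f : F // f ∉ u},
      (ρ (a : F) = (a : F) ∧ (a : F) ∉ orbSet {θ, σ'} x₂) ∨
      ((a : F) ∈ orbSet {θ, σ'} x₂ ∧ (ρ (a : F) = θ x₁ ∨ ρ (a : F) = σ' (θ x₁))) := by
    intro a
    by_cases hm : (a : F) ∈ orbSet {θ, σ'} x₂
    · refine Or.inr ⟨hm, ?_⟩
      have hm' := hm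
      rw [hedesc x₂] at hm'
      simp only [Set.mem_insert_iff, Set.mem_singleton_iff] at hm'
      rcases hm' with e | e | e | e
      · exact absurd (by rw [e]; exact hx₂u) a.2
      · exact Or.inl (by rw [e, hρy₂])
      · exact absurd (by rw [e]; exact hsx₂u) a.2
      · exact Or.inr (by rw [e, ← hecomm, hρsy₂])
    · exact Or.inl ⟨hρ₂ _ hm, hm⟩
  have hEσ : ∀ b : {f : F // f ∉ u},
      qmk {θ, σ'} (ρ (σ' (b : F))) = qmk {θ, σ'} (ρ (b : F)) := by
    intro b
    by_cases hbe : (b : F) ∈ orbSet {θ, σ'} x₂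
    · have hm' := hbe
      rw [hedesc x₂] at hm'
      simp only [Set.mem_insert_iff, Set.mem_singleton_iff] at hm'
      rcases hm' with e | e | e | e
      · exact absurd (by rw [e]; exact hx₂u) b.2
      · rw [e, hρsy₂, hρy₂]
        exact qmk_eq_iff.mpr (perm_smul_mem_orbSet hσm (mem_orbSet_self _ _))
      · exact absurd (by rw [e]; exact hsx₂u) b.2
      · rw [e, ← hecomm, invs, hρy₂, hρsy₂]
        exact (qmk_eq_iff.mpr (perm_smul_mem_orbSet hσm (mem_orbSet_self _ _))).symm
    · have hbe' : σ' (b : F) ∉ orbSet {θ, σ'} x₂ := fun hm =>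
        hbe (by rw [← invs (b : F)]; exact perm_smul_mem_orbSet hσm hm)
      rw [hρ₂ _ hbe', hρ₂ _ hbe]
      exact qmk_eq_iff.mpr (perm_smul_mem_orbSet hσm (mem_orbSet_self _ _))
  have hEθ : ∀ b : {f : F // f ∉ u},
      qmk {θ, σ'} (ρ ((θ' b : F))) = qmk {θ, σ'} (ρ (b : F)) := by
    intro b
    by_cases hbu : θ (b : F) ∈ u
    · have hcases : (b : F) = θ x₁ ∨ (b : F) = σ' (θ x₁) ∨ (b : F) = θ x₂ ∨
          (b : F) = σ' (θ x₂) := by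
        have hbu' : θ (b : F) ∈ ({x₁, σ' x₁, x₂, σ' x₂} : Set F) := by
          rw [← huset]; exact hbu
        simp only [Set.mem_insert_iff, Set.mem_singleton_iff] at hbu'
        rcases hbu' with e | e | e | e
        · exact Or.inl (by rw [← e, invθ])
        · exact Or.inr (Or.inl (by rw [hecomm, ← e, invθ]))
        · exact Or.inr (Or.inr (Or.inl (by rw [← e, invθ])))
        · exact Or.inr (Or.inr (Or.inr (by rw [hecomm, ← e, invθ])))
      rcases hcases with e | e | e | e
      · have hb : b = Y₁ := Subtype.ext (by rw [e, hY₁])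
        rw [hb, hθ'Y₁, hρy₂, hY₁, hρy₁]
      · have hb : b = SY₁ := Subtype.ext (by rw [e, hSY₁])
        rw [hb, hθ'SY₁, hρsy₂, hSY₁, hρsy₁]
      · have hb : b = Y₂ := Subtype.ext (by rw [e, hY₂])
        rw [hb, hθ'Y₂, hρy₁, hY₂, hρy₂]
      · have hb : b = SY₂ := Subtype.ext (by rw [e, hSY₂])
        rw [hb, hθ'SY₂, hρsy₁, hSY₂, hρsy₂]
    · rw [(hθ b).1 hbu]
      by_cases hbe : (b : F) ∈ orbSet {θ, σ'} x₂
      · exfalso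
        have hm' := hbe
        rw [hedesc x₂] at hm'
        simp only [Set.mem_insert_iff, Set.mem_singleton_iff] at hm'
        rcases hm' with e | e | e | e
        · exact b.2 (by rw [e]; exact hx₂u)
        · exact hbu (by rw [e, invθ]; exact hx₂u)
        · exact b.2 (by rw [e]; exact hsx₂u)
        · exact hbu (by rw [e, invθ]; exact hsx₂u)
      · have hbe' : θ (b : F) ∉ orbSet {θ, σ'} x₂ := fun hm =>
          hbe (by rw [← invθ (b : F)]; exact perm_smul_mem_orbSet hθm hm)
        rw [hρ₂ _ hbe', hρ₂ _ hbe]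
        exact qmk_eq_iff.mpr (perm_smul_mem_orbSet hθm (mem_orbSet_self _ _))
  have hEconst : ∀ a b : {f : F // f ∉ u}, a ∈ orbSet {θ', σ''} b →
      qmk {θ, σ'} (ρ (a : F)) = qmk {θ, σ'} (ρ (b : F)) := by
    intro a b hab
    have hsub : orbSet {θ', σ''} b ⊆
        {c : {f : F // f ∉ u} | qmk {θ, σ'} (ρ (c : F)) = qmk {θ, σ'} (ρ (b : F))} := by
      refine orbSet_subset_of_invariant hinvE ?_
        (show qmk {θ, σ'} (ρ ((b : {f : F // f ∉ u}) : F)) = qmk {θ, σ'} (ρ (b : F)) from rfl)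
      intro π hπ c hc
      simp only [Set.mem_insert_iff, Set.mem_singleton_iff] at hπ
      simp only [Set.mem_setOf_eq] at hc ⊢
      rcases hπ with hπ | hπ <;> rw [hπ]
      · rw [hEθ c]; exact hc
      · rw [hσ c, hEσ c]; exact hc
    exact hsub hab
  have hρnot : ∀ a : {f : F // f ∉ u}, ρ (a : F) ∉ orbSet {θ, σ'} x₂ := by
    intro a
    rcases hρcases a with ⟨he, hn⟩ | ⟨_, hval⟩
    · rw [he]; exact hn
    · rcases hval with hv | hv <;> rw [hv]
      · exact fun hm => hdisj _ m_y₁e₁ hm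
      · exact fun hm => hdisj _ m_sy₁e₁ hm
  have hneE : ∀ a : {f : F // f ∉ u}, qmk {θ, σ'} (ρ (a : F)) ≠ qmk {θ, σ'} x₂ :=
    fun a e => hρnot a (qmk_eq_iff.mp e)
  have hlink : ∀ a : {f : F // f ∉ u}, ∃ a' : {f : F // f ∉ u},
      (a' : F) = ρ (a : F) ∧ a ∈ orbSet {θ', σ''} a' ∧ a' ∈ orbSet {θ', σ''} a := by
    intro a
    rcases hρcases a with ⟨he, _⟩ | ⟨hmem, hval⟩
    · exact ⟨a, he.symm, mem_orbSet_self _ _, mem_orbSet_self _ _⟩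
    · have ha4 := mem4E₂ a hmem
      have hY₁4 : Y₁ ∈ ({Y₁, SY₁, Y₂, SY₂} : Set {f : F // f ∉ u}) := Set.mem_insert _ _
      have hSY₁4 : SY₁ ∈ ({Y₁, SY₁, Y₂, SY₂} : Set {f : F // f ∉ u}) := by simp
      rcases hval with hv | hv
      · exact ⟨Y₁, by rw [hY₁, hv], hmut a ha4 Y₁ hY₁4, hmut Y₁ hY₁4 a ha4⟩
      · exact ⟨SY₁, by rw [hSY₁, hv], hmut a ha4 SY₁ hSY₁4, hmut SY₁ hSY₁4 a ha4⟩
  have up_edge : ∀ c d : {f : F // f ∉ u}, (d : F) ∉ orbSet {θ, σ'} x₁ →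
      (d : F) ∉ orbSet {θ, σ'} x₂ → (c : F) ∈ orbSet {θ, σ'} (d : F) →
      c ∈ orbSet {θ', σ''} d := by
    intro c d hd1 hd2 hc
    have havoid := hOrbAvoid (d : F) hd1 hd2
    have hpre' := hpre d hd1 hd2
    have hsub : orbSet {θ, σ'} (d : F) ⊆ Subtype.val '' orbSet {θ', σ''} d := by
      refine orbSet_subset_of_invariant hinvEF ?_
        (show (d : F) ∈ Subtype.val '' orbSet {θ', σ''} d from ⟨d, mem_orbSet_self _ _, rfl⟩)
      rintro π hπ y ⟨c₀, hc₀, rfl⟩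
      simp only [Set.mem_insert_iff, Set.mem_singleton_iff] at hπ
      rcases hπ with hπ | hπ <;> rw [hπ]
      · have hcv : (c₀ : F) ∈ orbSet {θ, σ'} (d : F) := hpre' hc₀
        have hnb : θ (c₀ : F) ∉ u := havoid _ (perm_smul_mem_orbSet hθm hcv)
        refine ⟨θ' c₀, ?_, ?_⟩
        · exact perm_smul_mem_orbSet hθ'm hc₀
        · exact (hθ c₀).1 hnb
      · refine ⟨σ'' c₀, ?_, ?_⟩
        · exact perm_smul_mem_orbSet hσ''m hc₀
        · exact hσ c₀
    obtain ⟨c₀, hc₀, hcv⟩ := hsub hc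
    have hcb : c₀ = c := Subtype.ext hcv
    subst hcb
    exact hc₀
  have hEinj : ∀ a b : {f : F // f ∉ u},
      qmk {θ, σ'} (ρ (a : F)) = qmk {θ, σ'} (ρ (b : F)) → a ∈ orbSet {θ', σ''} b := by
    intro a b he
    obtain ⟨a', ha'v, ha'1, ha'2⟩ := hlink a
    obtain ⟨b', hb'v, hb'1, hb'2⟩ := hlink b
    have hab' : (a' : F) ∈ orbSet {θ, σ'} (b' : F) := by
      rw [ha'v, hb'v]; exact qmk_eq_iff.mp he
    have ha'b' : a' ∈ orbSet {θ', σ''} b' := by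
      by_cases hb'e : (b' : F) ∈ orbSet {θ, σ'} x₁
      · have hae : (a' : F) ∈ orbSet {θ, σ'} x₁ := by
          rw [← orbSet_eq_of_mem hb'e]; exact hab'
        exact hmut a' (mem4E₁ a' hae) b' (mem4E₁ b' hb'e)
      · have hb'2e : (b' : F) ∉ orbSet {θ, σ'} x₂ := by rw [hb'v]; exact hρnot b
        exact up_edge a' b' hb'e hb'2e hab'
    rw [← orbSet_eq_of_mem hb'2, ← orbSet_eq_of_mem ha'b']
    exact ha'1
  -- the edge count
  have hEcount : orbCount {θ', σ''} + 1 = orbCount {θ, σ'} := by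
    have esound : ∀ (a b : {f : F // f ∉ u}),
        MulAction.orbitRel (Subgroup.closure {θ', σ''}) {f : F // f ∉ u} a b →
        (⟨qmk {θ, σ'} (ρ (a : F)), hneE a⟩ : {q // q ≠ qmk {θ, σ'} x₂}) =
          ⟨qmk {θ, σ'} (ρ (b : F)), hneE b⟩ :=
      fun a b hab => Subtype.ext (hEconst a b (MulAction.orbitRel_apply.mp hab))
    have hgoal : orbCount {θ', σ''} + 1 =
        Nat.card (MulAction.orbitRel.Quotient (Subgroup.closure {θ, σ'}) F) := by
      apply count_helper (qmk {θ, σ'} x₂)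
        (Quotient.lift (fun a : {f : F // f ∉ u} =>
          (⟨qmk {θ, σ'} (ρ (a : F)), hneE a⟩ : {q // q ≠ qmk {θ, σ'} x₂})) esound)
      constructor
      · intro p q hpq
        obtain ⟨a, rfl⟩ := qmk_surjective _ p
        obtain ⟨b, rfl⟩ := qmk_surjective _ q
        have h1 : qmk {θ, σ'} (ρ (a : F)) = qmk {θ, σ'} (ρ (b : F)) :=
          congrArg Subtype.val hpq
        exact qmk_eq_iff.mpr (hEinj a b h1)
      · rintro ⟨q, hq⟩
        obtain ⟨y, rfl⟩ := qmk_surjective _ q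
        by_cases hy2 : y ∈ orbSet {θ, σ'} x₂
        · exact absurd (qmk_eq_iff.mpr hy2) hq
        · by_cases hy1 : y ∈ orbSet {θ, σ'} x₁
          · refine ⟨qmk {θ', σ''} Y₁, Subtype.ext ?_⟩
            show qmk {θ, σ'} (ρ (Y₁ : F)) = qmk {θ, σ'} y
            rw [hY₁, hρy₁]
            exact qmk_eq_iff.mpr (by rw [orbSet_eq_of_mem hy1]; exact m_y₁e₁)
          · have hyu : y ∉ u := by
              intro hyin
              rw [huset] at hyin
              simp only [Set.mem_insert_iff, Set.mem_singleton_iff] at hyin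
              rcases hyin with e | e | e | e
              · exact hy1 (by rw [e]; exact m_x₁e₁)
              · exact hy1 (by rw [e]; exact m_sx₁e₁)
              · exact hy2 (by rw [e]; exact m_x₂e₂)
              · exact hy2 (by rw [e]; exact m_sx₂e₂)
            refine ⟨qmk {θ', σ''} ⟨y, hyu⟩, Subtype.ext ?_⟩
            show qmk {θ, σ'} (ρ y) = qmk {θ, σ'} y
            rw [hρ₂ _ hy2]
    exact hgoal
  exact ⟨⟨hθ'fpf, hσ''fpf, hφ''fpf, hcard4⟩, hVcount, hEcount⟩
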